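/- arXiv:1604.01591 — 4 statements merged into one kernel-verified Lean document; each statement's English description precedes it below -/
import Mathlib

section
/- Let q(X) = (aᵀX − bᵀ)(I_d + XᵀX)^{-1}(Xᵀa − b) and s(a,b;X) = a(aᵀX − bᵀ) − X(I_d + XᵀX)^{-1}(Xᵀa − b)(aᵀX − bᵀ). Then the gradient of q with respect to X (under the trace inner product ⟨A,B⟩ = tr(ABᵀ)) equals 2·s(a,b;X)(I_d + XᵀX)^{-1}. -/
open Matrix

attribute [local instance] Matrix.frobeniusNormedAddCommGroup Matrix.frobeniusNormedSpace

/-- The TLS loss functional `q(a,b;X) = (aᵀX − bᵀ)(I_d + XᵀX)⁻¹(Xᵀa − b)`. -/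
noncomputable def tlsLoss {n d : ℕ} (a : Fin n → ℝ) (b : Fin d → ℝ)
    (X : Matrix (Fin n) (Fin d) ℝ) : ℝ :=
  (Xᵀ.mulVec a - b) ⬝ᵥ ((1 + Xᵀ * X)⁻¹.mulVec (Xᵀ.mulVec a - b))

/-- The TLS estimating function
`s(a,b;X) = a(aᵀX − bᵀ) − X(I_d + XᵀX)⁻¹(Xᵀa − b)(aᵀX − bᵀ)`. -/
noncomputable def tlsScore {n d : ℕ} (a : Fin n → ℝ) (b : Fin d → ℝ)
    (X : Matrix (Fin n) (Fin d) ℝ) : Matrix (Fin n) (Fin d) ℝ :=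
  vecMulVec a (Xᵀ.mulVec a - b) -
    X * (1 + Xᵀ * X)⁻¹ * vecMulVec (Xᵀ.mulVec a - b) (Xᵀ.mulVec a - b)

/-!
Write `N = (I + XᵀX)⁻¹` and `u = N(Xᵀa − b)`. By the product rule and
`d(M⁻¹) = −M⁻¹ (dM) M⁻¹`, the derivative of `q` in direction `H` is
`2 uᵀHᵀa − uᵀ(XᵀH + HᵀX)u = 2 ⟨Hu, a − Xu⟩`, using that `N` is symmetric.
On the other side `s N = a uᵀ − X u uᵀ`, so `tr(2 s N Hᵀ) = 2 ⟨Hu, a − Xu⟩` as well.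
-/

section
attribute [local instance] Matrix.frobeniusNormedRing Matrix.frobeniusNormedAlgebra

theorem HasFDerivAt.matrix_inv {𝕜 m E : Type*} [RCLike 𝕜] [Fintype m] [DecidableEq m]
    [NormedAddCommGroup E] [NormedSpace 𝕜 E] {f : E → Matrix m m 𝕜}
    {f' : E →L[𝕜] Matrix m m 𝕜} {x : E} (hf : HasFDerivAt f f' x) (hx : IsUnit (f x)) :
    HasFDerivAt (fun y => (f y)⁻¹)
      ((-ContinuousLinearMap.mulLeftRight 𝕜 _ (f x)⁻¹ (f x)⁻¹).comp f') x := by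
  have := (hasFDerivAt_ringInverse (𝕜 := 𝕜) hx.unit).comp x hf
  simp only [Matrix.coe_units_inv, IsUnit.unit_spec] at this
  simpa only [Function.comp_def, Matrix.nonsing_inv_eq_ringInverse] using this

end

theorem Matrix.IsSymm.dotProduct_mulVec {n R : Type*} [Fintype n] [CommSemiring R]
    {N : Matrix n n R} (hN : N.IsSymm) (v w : n → R) :
    v ⬝ᵥ (N *ᵥ w) = (N *ᵥ v) ⬝ᵥ w := by
  rw [Matrix.dotProduct_mulVec, ← vecMul_transpose, hN.eq]

theorem isUnit_one_add_transpose_mul_self {m n : Type*} [Fintype m] [Fintype n] [DecidableEq n]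
    (X : Matrix m n ℝ) : IsUnit (1 + Xᵀ * X) :=
  (PosDef.one.add_posSemidef (by simpa using posSemidef_conjTranspose_mul_self X)).isUnit

theorem isSymm_one_add_transpose_mul_self {m n : Type*} [Fintype m] [DecidableEq n]
    (X : Matrix m n ℝ) : (1 + Xᵀ * X).IsSymm :=
  isSymm_one.add (by simp [IsSymm, transpose_mul])

noncomputable def tlsWeightedResidual {n d : ℕ} (a : Fin n → ℝ) (b : Fin d → ℝ)
    (X : Matrix (Fin n) (Fin d) ℝ) : Fin d → ℝ :=
  (1 + Xᵀ * X)⁻¹ *ᵥ (Xᵀ *ᵥ a - b)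

theorem fderiv_tlsLoss_apply {n d : ℕ} (a : Fin n → ℝ) (b : Fin d → ℝ)
    (X H : Matrix (Fin n) (Fin d) ℝ) :
    fderiv ℝ (tlsLoss a b) X H =
      2 * ((H *ᵥ tlsWeightedResidual a b X) ⬝ᵥ (a - X *ᵥ tlsWeightedResidual a b X)) := by
  set N := (1 + Xᵀ * X)⁻¹
  set c := Xᵀ *ᵥ a - b
  have hv : HasFDerivAt (fun Y : Matrix (Fin n) (Fin d) ℝ => Yᵀ *ᵥ a - b) _ X :=
    ((mulVecBilin ℝ ℝ).flip a ∘ₗ (transposeLinearEquiv _ _ ℝ ℝ).toLinearMap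
      ).toContinuousLinearMap.hasFDerivAt.sub_const b
  have hM : HasFDerivAt (fun Y : Matrix (Fin n) (Fin d) ℝ => 1 + Yᵀ * Y) _ X :=
    ((mulLinearMap ℝ).toContinuousBilinearMap.hasFDerivAt_of_bilinear
      (transposeLinearEquiv _ _ ℝ ℝ).toLinearMap.toContinuousLinearMap.hasFDerivAt
      (hasFDerivAt_id X)).const_add 1
  have hNv := (mulVecBilin ℝ ℝ).toContinuousBilinearMap.hasFDerivAt_of_bilinear
    (hM.matrix_inv (isUnit_one_add_transpose_mul_self X)) hv
  have hq : HasFDerivAt (tlsLoss a b) _ X :=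
    (dotProductBilin ℝ ℝ : (Fin d → ℝ) →ₗ[ℝ] _ →ₗ[ℝ] ℝ).toContinuousBilinearMap
      |>.hasFDerivAt_of_bilinear hv hNv
  have hN : N.IsSymm := (isSymm_one_add_transpose_mul_self X).inv
  set u := tlsWeightedResidual a b X
  have hu : N *ᵥ c = u := rfl
  calc fderiv ℝ (tlsLoss a b) X H
      = c ⬝ᵥ (N *ᵥ (Hᵀ *ᵥ a) + (-(N * (Xᵀ * H + Hᵀ * X) * N)) *ᵥ c)
          + (Hᵀ *ᵥ a) ⬝ᵥ (N *ᵥ c) := by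
        rw [hq.fderiv]; rfl
    _ = 2 * (u ⬝ᵥ (Hᵀ *ᵥ a)) - u ⬝ᵥ (Xᵀ *ᵥ (H *ᵥ u))
          - u ⬝ᵥ (Hᵀ *ᵥ (X *ᵥ u)) := by
        simp only [neg_mulVec, ← mulVec_mulVec, add_mulVec, dotProduct_add, dotProduct_neg,
          hN.dotProduct_mulVec, mulVec_add, hu]
        rw [dotProduct_comm (Hᵀ *ᵥ a)]
        ring
    _ = 2 * ((H *ᵥ u) ⬝ᵥ (a - X *ᵥ u)) := by
        rw [dotProduct_transpose_mulVec, dotProduct_transpose_mulVec, dotProduct_transpose_mulVec,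
          dotProduct_comm (X *ᵥ u), dotProduct_comm a, dotProduct_sub]
        ring

theorem tlsScore_mul_inv {n d : ℕ} (a : Fin n → ℝ) (b : Fin d → ℝ)
    (X : Matrix (Fin n) (Fin d) ℝ) :
    tlsScore a b X * (1 + Xᵀ * X)⁻¹ =
      vecMulVec (a - X *ᵥ tlsWeightedResidual a b X) (tlsWeightedResidual a b X) := by
  have hu : (Xᵀ *ᵥ a - b) ᵥ* (1 + Xᵀ * X)⁻¹ = tlsWeightedResidual a b X := by
    rw [← mulVec_transpose, (isSymm_one_add_transpose_mul_self X).inv.eq, tlsWeightedResidual]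
  rw [tlsScore, Matrix.sub_mul, Matrix.mul_assoc, vecMulVec_mul, vecMulVec_mul, mul_vecMulVec,
    hu, ← mulVec_mulVec, sub_vecMulVec, tlsWeightedResidual]

theorem trace_vecMulVec_mul_transpose {m n R : Type*} [Fintype m] [Fintype n] [CommSemiring R]
    (w : m → R) (u : n → R) (H : Matrix m n R) :
    trace (vecMulVec w u * Hᵀ) = (H *ᵥ u) ⬝ᵥ w := by
  rw [vecMulVec_mul, vecMul_transpose, trace_vecMulVec, dotProduct_comm]

/-- The gradient of `q` with respect to the trace inner product `⟨A,B⟩ = tr(ABᵀ)`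
equals `2·s(a,b;X)(I_d + XᵀX)⁻¹`: its pairing with any direction `H` gives the derivative. -/
theorem gradient_tlsLoss {n d : ℕ} (a : Fin n → ℝ) (b : Fin d → ℝ)
    (X : Matrix (Fin n) (Fin d) ℝ) :
    ∀ H : Matrix (Fin n) (Fin d) ℝ,
      fderiv ℝ (fun Y => tlsLoss a b Y) X H =
        Matrix.trace ((2 • (tlsScore a b X * (1 + Xᵀ * X)⁻¹)) * Hᵀ) := by
  intro H
  rw [fderiv_tlsLoss_apply, Matrix.smul_mul, trace_smul, tlsScore_mul_inv,
    trace_vecMulVec_mul_transpose, nsmul_eq_mul, Nat.cast_ofNat]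
end

section
/- Define s(a,b;X) = a(aᵀX − bᵀ) − X(I_d + XᵀX)^{-1}(Xᵀa − b)(aᵀX − bᵀ). If a = a₀ + ã, b = X₀ᵀa₀ + b̃ with nonrandom a₀, and the centered random vector [ã; b̃] has covariance σ²I_{n+d}, then E[s(a,b;X₀)] = 0 (s is an unbiased estimating function at the true parameter X₀). -/
/-! With the residual `r = X₀ᵀã − b̃` one has `s(a, b; X₀) = a₀rᵀ + ãrᵀ − X₀(I + X₀ᵀX₀)⁻¹rrᵀ`.
The error moments give `E[a₀rᵀ] = 0`, `E[ãrᵀ] = σ²X₀` and `E[rrᵀ] = σ²(I + X₀ᵀX₀)`, so the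
correction term has mean exactly `σ²X₀` and cancels the second one. -/

open Matrix MeasureTheory

/-- Entrywise expectation of a random matrix. -/
noncomputable def matExp {Ω : Type*} [MeasurableSpace Ω] (μ : Measure Ω) {p q : ℕ}
    (M : Ω → Matrix (Fin p) (Fin q) ℝ) : Matrix (Fin p) (Fin q) ℝ :=
  Matrix.of fun i j => ∫ ω, M ω i j ∂μ

section IntegrableEntries

variable {Ω : Type*} [MeasurableSpace Ω] {m n l : Type*}

def IntegrableEntries (μ : Measure Ω) (M : Ω → Matrix m n ℝ) : Prop :=
  ∀ i j, Integrable (fun ω => M ω i j) μ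

variable {μ : Measure Ω} {M N : Ω → Matrix m n ℝ}

theorem IntegrableEntries.add (hM : IntegrableEntries μ M) (hN : IntegrableEntries μ N) :
    IntegrableEntries μ (fun ω => M ω + N ω) :=
  fun i j => (hM i j).add (hN i j)

theorem IntegrableEntries.sub (hM : IntegrableEntries μ M) (hN : IntegrableEntries μ N) :
    IntegrableEntries μ (fun ω => M ω - N ω) :=
  fun i j => (hM i j).sub (hN i j)

theorem IntegrableEntries.const_mul [Fintype m] (A : Matrix l m ℝ) (hM : IntegrableEntries μ M) :
    IntegrableEntries μ (fun ω => A * M ω) :=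
  fun i j => integrable_finsetSum _ fun k _ => (hM k j).const_mul (A i k)

theorem IntegrableEntries.mul_const [Fintype n] (hM : IntegrableEntries μ M) (A : Matrix n l ℝ) :
    IntegrableEntries μ (fun ω => M ω * A) :=
  fun i j => integrable_finsetSum _ fun k _ => (hM i k).mul_const (A k j)

end IntegrableEntries

section MatExp

variable {Ω : Type*} [MeasurableSpace Ω] {μ : Measure Ω} {p q r : ℕ}
  {M N : Ω → Matrix (Fin p) (Fin q) ℝ}

theorem matExp_add (hM : IntegrableEntries μ M) (hN : IntegrableEntries μ N) :
    matExp μ (fun ω => M ω + N ω) = matExp μ M + matExp μ N := by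
  ext i j
  exact integral_add (hM i j) (hN i j)

theorem matExp_sub (hM : IntegrableEntries μ M) (hN : IntegrableEntries μ N) :
    matExp μ (fun ω => M ω - N ω) = matExp μ M - matExp μ N := by
  ext i j
  exact integral_sub (hM i j) (hN i j)

theorem matExp_const_mul (A : Matrix (Fin r) (Fin p) ℝ) (hM : IntegrableEntries μ M) :
    matExp μ (fun ω => A * M ω) = A * matExp μ M := by
  ext i j
  simp only [matExp, of_apply, mul_apply]
  rw [integral_finsetSum _ fun k _ => (hM k j).const_mul (A i k)]
  simp only [integral_const_mul]

theorem matExp_mul_const (hM : IntegrableEntries μ M) (A : Matrix (Fin q) (Fin r) ℝ) :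
    matExp μ (fun ω => M ω * A) = matExp μ M * A := by
  ext i j
  simp only [matExp, of_apply, mul_apply]
  rw [integral_finsetSum _ fun k _ => (hM i k).mul_const (A k j)]
  simp only [integral_mul_const]

theorem matExp_vecMulVec_comm (u : Ω → Fin p → ℝ) (v : Ω → Fin q → ℝ) :
    matExp μ (fun ω => vecMulVec (v ω) (u ω)) = (matExp μ fun ω => vecMulVec (u ω) (v ω))ᵀ := by
  ext i j
  simp only [matExp, transpose_apply, of_apply, vecMulVec_apply, mul_comm]

theorem matExp_vecMulVec_const (c : Fin p → ℝ) (u : Ω → Fin q → ℝ) :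
    matExp μ (fun ω => vecMulVec c (u ω)) = vecMulVec c (fun j => ∫ ω, u ω j ∂μ) := by
  ext i j
  exact integral_const_mul (c i) _

end MatExp

def tlsResidual {p q : Type*} [Fintype p] (X : Matrix p q ℝ) (a : p → ℝ) (b : q → ℝ) : q → ℝ :=
  Xᵀ *ᵥ a - b

theorem tlsScore_eq {n d : ℕ} (a : Fin n → ℝ) (b : Fin d → ℝ) (X : Matrix (Fin n) (Fin d) ℝ) :
    tlsScore a b X = vecMulVec a (tlsResidual X a b) -
      X * (1 + Xᵀ * X)⁻¹ * vecMulVec (tlsResidual X a b) (tlsResidual X a b) :=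
  rfl

section Residual

variable {p q l : Type*} [Fintype p] (X : Matrix p q ℝ)

theorem tlsResidual_add_mulVec (a₀ a : p → ℝ) (b : q → ℝ) :
    tlsResidual X (a₀ + a) (Xᵀ *ᵥ a₀ + b) = tlsResidual X a b := by
  simp only [tlsResidual, mulVec_add]
  abel

theorem vecMulVec_tlsResidual (u : l → ℝ) (a : p → ℝ) (b : q → ℝ) :
    vecMulVec u (tlsResidual X a b) = vecMulVec u a * X - vecMulVec u b := by
  rw [tlsResidual, vecMulVec_sub, mulVec_transpose, vecMulVec_mul]

theorem tlsResidual_vecMulVec (a : p → ℝ) (b : q → ℝ) (u : l → ℝ) :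
    vecMulVec (tlsResidual X a b) u = Xᵀ * vecMulVec a u - vecMulVec b u := by
  rw [tlsResidual, sub_vecMulVec, mul_vecMulVec]

end Residual

theorem mul_inv_one_add_transpose_mul_self_mul {m n : Type*} [Fintype m] [Fintype n]
    [DecidableEq n] (X : Matrix m n ℝ) : X * (1 + Xᵀ * X)⁻¹ * (1 + Xᵀ * X) = X := by
  have hpos : (1 + Xᵀ * X).PosDef :=
    PosDef.one.add_posSemidef (by simpa using posSemidef_conjTranspose_mul_self X)
  exact nonsing_inv_mul_cancel_right _ _ ((isUnit_iff_isUnit_det _).mp hpos.isUnit)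

section RandomResidual

variable {Ω : Type*} [MeasurableSpace Ω] {μ : Measure Ω} {n d k : ℕ}
  (X : Matrix (Fin n) (Fin d) ℝ) {u : Ω → Fin k → ℝ} {a : Ω → Fin n → ℝ} {b : Ω → Fin d → ℝ}

theorem IntegrableEntries.vecMulVec_tlsResidual
    (hua : IntegrableEntries μ fun ω => vecMulVec (u ω) (a ω))
    (hub : IntegrableEntries μ fun ω => vecMulVec (u ω) (b ω)) :
    IntegrableEntries μ fun ω => vecMulVec (u ω) (tlsResidual X (a ω) (b ω)) := by
  simpa only [_root_.vecMulVec_tlsResidual] using (hua.mul_const X).sub hub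

theorem IntegrableEntries.tlsResidual_vecMulVec
    (hau : IntegrableEntries μ fun ω => vecMulVec (a ω) (u ω))
    (hbu : IntegrableEntries μ fun ω => vecMulVec (b ω) (u ω)) :
    IntegrableEntries μ fun ω => vecMulVec (tlsResidual X (a ω) (b ω)) (u ω) := by
  simpa only [_root_.tlsResidual_vecMulVec] using (hau.const_mul Xᵀ).sub hbu

theorem matExp_vecMulVec_tlsResidual
    (hua : IntegrableEntries μ fun ω => vecMulVec (u ω) (a ω))
    (hub : IntegrableEntries μ fun ω => vecMulVec (u ω) (b ω)) :
    matExp μ (fun ω => vecMulVec (u ω) (tlsResidual X (a ω) (b ω))) =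
      matExp μ (fun ω => vecMulVec (u ω) (a ω)) * X -
        matExp μ fun ω => vecMulVec (u ω) (b ω) := by
  simp only [vecMulVec_tlsResidual]
  rw [matExp_sub (hua.mul_const X) hub, matExp_mul_const hua]

theorem matExp_tlsResidual_vecMulVec
    (hau : IntegrableEntries μ fun ω => vecMulVec (a ω) (u ω))
    (hbu : IntegrableEntries μ fun ω => vecMulVec (b ω) (u ω)) :
    matExp μ (fun ω => vecMulVec (tlsResidual X (a ω) (b ω)) (u ω)) =
      Xᵀ * matExp μ (fun ω => vecMulVec (a ω) (u ω)) -
        matExp μ fun ω => vecMulVec (b ω) (u ω) := by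
  simp only [tlsResidual_vecMulVec]
  rw [matExp_sub (hau.const_mul Xᵀ) hbu, matExp_const_mul Xᵀ hau]

theorem matExp_vecMulVec_const_tlsResidual (c : Fin k → ℝ)
    (ha : ∀ i, Integrable (fun ω => a ω i) μ) (hb : ∀ i, Integrable (fun ω => b ω i) μ)
    (ha_mean : ∀ i, ∫ ω, a ω i ∂μ = 0) (hb_mean : ∀ i, ∫ ω, b ω i ∂μ = 0) :
    matExp μ (fun ω => vecMulVec c (tlsResidual X (a ω) (b ω))) = 0 := by
  rw [matExp_vecMulVec_tlsResidual X (fun i j => (ha j).const_mul (c i))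
      (fun i j => (hb j).const_mul (c i)),
    matExp_vecMulVec_const, matExp_vecMulVec_const, funext ha_mean, funext hb_mean]
  ext i j
  simp [vecMulVec_apply, mul_apply]

end RandomResidual

theorem tlsScore_unbiased_general {Ω : Type*} [MeasurableSpace Ω] (μ : Measure Ω)
    {n d : ℕ} (σ2 : ℝ)
    (a0 : Fin n → ℝ) (X0 : Matrix (Fin n) (Fin d) ℝ)
    (ta : Ω → Fin n → ℝ) (tb : Ω → Fin d → ℝ)
    (hta_int : ∀ i, Integrable (fun ω => ta ω i) μ)
    (htb_int : ∀ i, Integrable (fun ω => tb ω i) μ)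
    (haa_int : ∀ i j, Integrable (fun ω => ta ω i * ta ω j) μ)
    (hab_int : ∀ i j, Integrable (fun ω => ta ω i * tb ω j) μ)
    (hbb_int : ∀ i j, Integrable (fun ω => tb ω i * tb ω j) μ)
    (hta_mean : ∀ i, ∫ ω, ta ω i ∂μ = 0)
    (htb_mean : ∀ i, ∫ ω, tb ω i ∂μ = 0)
    (haa : matExp μ (fun ω => vecMulVec (ta ω) (ta ω)) = σ2 • 1)
    (hab : matExp μ (fun ω => vecMulVec (ta ω) (tb ω)) = 0)
    (hbb : matExp μ (fun ω => vecMulVec (tb ω) (tb ω)) = σ2 • 1) :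
    matExp μ (fun ω => tlsScore (a0 + ta ω) (X0ᵀ.mulVec a0 + tb ω) X0) = 0 := by
  set r := fun ω => tlsResidual X0 (ta ω) (tb ω)
  have hscore : ∀ ω, tlsScore (a0 + ta ω) (X0ᵀ *ᵥ a0 + tb ω) X0 = vecMulVec a0 (r ω) +
      vecMulVec (ta ω) (r ω) - X0 * (1 + X0ᵀ * X0)⁻¹ * vecMulVec (r ω) (r ω) := fun ω => by
    rw [tlsScore_eq, tlsResidual_add_mulVec, add_vecMulVec]
  have hba_int : IntegrableEntries μ fun ω => vecMulVec (tb ω) (ta ω) := fun i j => by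
    simpa only [vecMulVec_apply, mul_comm] using hab_int j i
  have har_int := IntegrableEntries.vecMulVec_tlsResidual X0 haa_int hab_int
  have hbr_int := IntegrableEntries.vecMulVec_tlsResidual X0 hba_int hbb_int
  have hcr_int : IntegrableEntries μ fun ω => vecMulVec a0 (r ω) :=
    IntegrableEntries.vecMulVec_tlsResidual X0 (fun i j => (hta_int j).const_mul (a0 i))
      (fun i j => (htb_int j).const_mul (a0 i))
  have hrr_int := IntegrableEntries.tlsResidual_vecMulVec X0 har_int hbr_int
  have hcr := matExp_vecMulVec_const_tlsResidual X0 a0 hta_int htb_int hta_mean htb_mean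
  have har : matExp μ (fun ω => vecMulVec (ta ω) (r ω)) = σ2 • X0 := by
    rw [matExp_vecMulVec_tlsResidual X0 haa_int hab_int, haa, hab]
    simp
  have hbr : matExp μ (fun ω => vecMulVec (tb ω) (r ω)) = -(σ2 • 1) := by
    rw [matExp_vecMulVec_tlsResidual X0 hba_int hbb_int, matExp_vecMulVec_comm, hab, hbb]
    simp
  have hrr : matExp μ (fun ω => vecMulVec (r ω) (r ω)) = σ2 • (1 + X0ᵀ * X0) := by
    rw [matExp_tlsResidual_vecMulVec X0 har_int hbr_int, har, hbr]
    simp [smul_add, add_comm]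
  simp only [hscore]
  rw [matExp_sub (hcr_int.add har_int) (hrr_int.const_mul _), matExp_add hcr_int har_int,
    matExp_const_mul _ hrr_int, hcr, har, hrr, Matrix.mul_smul,
    mul_inv_one_add_transpose_mul_self_mul]
  simp

/-- In the EIV model `a = a₀ + ã`, `b = X₀ᵀa₀ + b̃` with centered errors whose stacked
covariance is `σ²I_{n+d}`, the estimating function is unbiased: `E[s(a,b;X₀)] = 0`. -/
theorem tlsScore_unbiased {Ω : Type*} [MeasurableSpace Ω] (μ : Measure Ω)
    [IsProbabilityMeasure μ] {n d : ℕ} (σ2 : ℝ) (hσ : 0 < σ2)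
    (a0 : Fin n → ℝ) (X0 : Matrix (Fin n) (Fin d) ℝ)
    (ta : Ω → Fin n → ℝ) (tb : Ω → Fin d → ℝ)
    (hta_int : ∀ i, Integrable (fun ω => ta ω i) μ)
    (htb_int : ∀ i, Integrable (fun ω => tb ω i) μ)
    (haa_int : ∀ i j, Integrable (fun ω => ta ω i * ta ω j) μ)
    (hab_int : ∀ i j, Integrable (fun ω => ta ω i * tb ω j) μ)
    (hbb_int : ∀ i j, Integrable (fun ω => tb ω i * tb ω j) μ)
    (hta_mean : ∀ i, ∫ ω, ta ω i ∂μ = 0)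
    (htb_mean : ∀ i, ∫ ω, tb ω i ∂μ = 0)
    (haa : matExp μ (fun ω => vecMulVec (ta ω) (ta ω)) = σ2 • 1)
    (hab : matExp μ (fun ω => vecMulVec (ta ω) (tb ω)) = 0)
    (hbb : matExp μ (fun ω => vecMulVec (tb ω) (tb ω)) = σ2 • 1) :
    matExp μ (fun ω => tlsScore (a0 + ta ω) (X0ᵀ.mulVec a0 + tb ω) X0) = 0 :=
  tlsScore_unbiased_general μ σ2 a0 X0 ta tb hta_int htb_int haa_int hab_int hbb_int hta_mean
    htb_mean haa hab hbb
end

section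
/- With a = a₀ + ã, b = X₀ᵀa₀ + b̃, b₀ = X₀ᵀa₀, the estimating function admits the decomposition s(a,b;X₀) = W₁X₀ − W₂ + W₃X₀ − W₄ − X₀(I_d + X₀ᵀX₀)^{-1}(X₀ᵀW₃X₀ − X₀ᵀW₄ − W₄ᵀX₀ + W₅), where W₁ = a₀ãᵀ, W₂ = a₀b̃ᵀ, W₃ = ããᵀ − σ²I_n, W₄ = ãb̃ᵀ, W₅ = b̃b̃ᵀ − σ²I_d. -/
open Matrix

namespace Matrix

variable {l m n : Type*} {α : Type*} [CommRing α]

theorem vecMulVec_transpose_mulVec [Fintype m] (w : l → α) (X : Matrix m n α) (v : m → α) :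
    vecMulVec w (Xᵀ *ᵥ v) = vecMulVec w v * X := by
  rw [vecMulVec_mul, mulVec_transpose]

theorem vecMulVec_transpose_mulVec_sub_self [Fintype m] (X : Matrix m n α) (u : m → α)
    (v : n → α) :
    vecMulVec (Xᵀ *ᵥ u - v) (Xᵀ *ᵥ u - v) =
      Xᵀ * vecMulVec u u * X - Xᵀ * vecMulVec u v - (vecMulVec u v)ᵀ * X + vecMulVec v v := by
  simp only [sub_vecMulVec, vecMulVec_sub, vecMulVec_transpose_mulVec, ← mul_vecMulVec,
    transpose_vecMulVec, Matrix.sub_mul, Matrix.mul_assoc]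
  abel

theorem mul_nonsing_inv_mul_add_smul [Fintype n] [DecidableEq n] (X : Matrix m n α)
    {M : Matrix n n α} (hM : IsUnit M.det) (C : Matrix n n α) (c : α) :
    X * M⁻¹ * (C + c • M) = X * M⁻¹ * C + c • X := by
  rw [Matrix.mul_add, Matrix.mul_smul, Matrix.mul_assoc X M⁻¹ M, nonsing_inv_mul _ hM,
    Matrix.mul_one]

theorem isUnit_det_one_add_transpose_mul_self [Fintype m] [Fintype n] [DecidableEq n]
    (X : Matrix m n ℝ) : IsUnit (1 + Xᵀ * X).det :=
  (isUnit_iff_isUnit_det _).1 (PosDef.one.add_posSemidef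
    (posSemidef_conjTranspose_mul_self X)).isUnit

end Matrix

/-- With `a = a₀ + ã`, `b = X₀ᵀa₀ + b̃`, the estimating function decomposes as
`s(a,b;X₀) = W₁X₀ − W₂ + W₃X₀ − W₄ − X₀(I + X₀ᵀX₀)⁻¹(X₀ᵀW₃X₀ − X₀ᵀW₄ − W₄ᵀX₀ + W₅)`,
where `W₁ = a₀ãᵀ`, `W₂ = a₀b̃ᵀ`, `W₃ = ããᵀ − σ²I_n`, `W₄ = ãb̃ᵀ`, `W₅ = b̃b̃ᵀ − σ²I_d`. -/
theorem tlsScore_decomposition {n d : ℕ} (σ2 : ℝ) (X0 : Matrix (Fin n) (Fin d) ℝ)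
    (a0 ta : Fin n → ℝ) (tb : Fin d → ℝ) :
    tlsScore (a0 + ta) (X0ᵀ.mulVec a0 + tb) X0 =
      (vecMulVec a0 ta) * X0 - vecMulVec a0 tb +
      (vecMulVec ta ta - σ2 • 1) * X0 - vecMulVec ta tb -
      X0 * (1 + X0ᵀ * X0)⁻¹ *
        (X0ᵀ * (vecMulVec ta ta - σ2 • 1) * X0 - X0ᵀ * vecMulVec ta tb -
          (vecMulVec ta tb)ᵀ * X0 + (vecMulVec tb tb - σ2 • 1)) := by
  set W : Matrix (Fin d) (Fin d) ℝ :=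
    X0ᵀ * (vecMulVec ta ta - σ2 • 1) * X0 - X0ᵀ * vecMulVec ta tb -
      (vecMulVec ta tb)ᵀ * X0 + (vecMulVec tb tb - σ2 • 1)
  have residual : X0ᵀ *ᵥ (a0 + ta) - (X0ᵀ *ᵥ a0 + tb) = X0ᵀ *ᵥ ta - tb := by
    rw [mulVec_add]; abel
  -- the two `σ²` corrections in `W` add up to `σ² (I + X₀ᵀX₀)`, which the inverse absorbs
  have outer : vecMulVec (X0ᵀ *ᵥ ta - tb) (X0ᵀ *ᵥ ta - tb) = W + σ2 • (1 + X0ᵀ * X0) := by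
    rw [vecMulVec_transpose_mulVec_sub_self]
    simp only [W, Matrix.mul_sub, Matrix.sub_mul, Matrix.mul_smul, Matrix.smul_mul,
      Matrix.mul_one, smul_add]
    abel
  rw [tlsScore, residual, outer,
    mul_nonsing_inv_mul_add_smul _ (isUnit_det_one_add_transpose_mul_self X0),
    add_vecMulVec, vecMulVec_sub, vecMulVec_sub, vecMulVec_transpose_mulVec,
    vecMulVec_transpose_mulVec, Matrix.sub_mul, Matrix.smul_mul, Matrix.one_mul]
  abel
end

section
/- Suppose X̂_m → X₀ in probability, Δ̂_m = √m(X̂_m − X₀) satisfies V_A Δ̂_m = −y_m/√m + r_m with ‖r_m‖ ≤ ‖Δ̂_m‖·ε_m where ε_m → 0 in probability, V_A is a fixed invertible matrix, and y_m/√m converges in distribution. Then Δ̂_m is stochastically bounded (O_p(1)) and √m(X̂_m − X₀) converges in distribution to V_A^{-1}·L, where L is the distributional limit of −y_m/√m. -/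
open Matrix MeasureTheory Filter

attribute [local instance] Matrix.frobeniusNormedAddCommGroup Matrix.frobeniusNormedSpace

noncomputable instance matMeasurableSpace {n d : ℕ} :
    MeasurableSpace (Matrix (Fin n) (Fin d) ℝ) :=
  inferInstanceAs (MeasurableSpace (Fin n → Fin d → ℝ))

/-!
Put `S m = -(√m)⁻¹ • y m`. Then `Δ m - V_A⁻¹ S m = V_A⁻¹ r m` has norm at most
`‖Δ m‖ · ‖V_A⁻¹‖ |ε_m|`. Being convergent in distribution, `S m` is bounded in probability, and
outside the event `‖V_A⁻¹‖ |ε_m| ≥ 1/2` one has `‖Δ m‖ ≤ 2 ‖V_A⁻¹ S m‖`; so `Δ` is bounded in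
probability too. Hence the remainder `V_A⁻¹ r m` tends to `0` in probability, and Slutsky's lemma
transfers the limit law of `V_A⁻¹ S m`, the image of `ν` under `V_A⁻¹`, to `Δ m`.
-/

open Set

noncomputable def boundedArctan : BoundedContinuousFunction ℝ ℝ :=
  BoundedContinuousFunction.mkOfBound ⟨Real.arctan, Real.continuous_arctan⟩ Real.pi
    fun x y => by
      rw [Real.dist_eq, abs_le]
      constructor <;> simp only [ContinuousMap.coe_mk] <;>
        linarith [Real.neg_pi_div_two_lt_arctan x, Real.arctan_lt_pi_div_two x,
          Real.neg_pi_div_two_lt_arctan y, Real.arctan_lt_pi_div_two y]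

namespace MeasureTheory

variable {Ω Ω' E : Type*} {mΩ : MeasurableSpace Ω} {mΩ' : MeasurableSpace Ω'} {μ : Measure Ω}
  {μ' : Measure Ω'} {mE : MeasurableSpace E}

lemma eventually_integrable_comp_of_tendsto_integral [TopologicalSpace E] [OpensMeasurableSpace E]
    [IsProbabilityMeasure μ] {ν : Measure E} [IsProbabilityMeasure ν] {X : ℕ → Ω → E}
    (hX : ∀ f : BoundedContinuousFunction E ℝ,
      Tendsto (fun m => ∫ ω, f (X m ω) ∂μ) atTop (nhds (∫ x, f x ∂ν)))
    (f : BoundedContinuousFunction E ℝ) :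
    ∀ᶠ m in atTop, Integrable (fun ω => f (X m ω)) μ := by
  -- If `f ∘ X m` is not integrable, neither is `(1 - f) ∘ X m`: both integrals are then `0`,
  -- while their sum tends to `1`.
  have hlim : ∫ x, f x ∂ν + ∫ x, (1 - f) x ∂ν = 1 := by
    rw [← integral_add (f.integrable ν) ((1 - f).integrable ν)]
    simp
  filter_upwards [((hX f).add (hX (1 - f))).eventually_ne (hlim ▸ one_ne_zero)] with m hm
  by_contra hf
  have h1f : ¬ Integrable (fun ω => (1 - f) (X m ω)) μ := fun h =>
    hf (((integrable_const 1).sub h).congr (ae_of_all _ fun ω => by simp))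
  exact hm (by rw [integral_undef hf, integral_undef h1f, add_zero])

lemma eventually_aemeasurable_of_tendsto_integral [NormedAddCommGroup E] [NormedSpace ℝ E]
    [FiniteDimensional ℝ E] [BorelSpace E] [IsProbabilityMeasure μ]
    {ν : Measure E} [IsProbabilityMeasure ν] {X : ℕ → Ω → E}
    (hX : ∀ f : BoundedContinuousFunction E ℝ,
      Tendsto (fun m => ∫ ω, f (X m ω) ∂μ) atTop (nhds (∫ x, f x ∂ν))) :
    ∀ᶠ m in atTop, AEMeasurable (X m) μ := by
  let b := Module.finBasis ℝ E
  let coord (i : Fin (Module.finrank ℝ E)) : BoundedContinuousFunction E ℝ :=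
    boundedArctan.compContinuous ⟨b.coord i, (b.coord i).continuous_of_finiteDimensional⟩
  -- `arctan` is a measurable embedding, so the eventual integrability of the bounded functions
  -- `arctan ∘ coord i ∘ X m` gives back the measurability of the coordinates of `X m`.
  have harctan : MeasurableEmbedding Real.arctan :=
    Real.continuous_arctan.measurableEmbedding Real.arctan_injective
  filter_upwards [eventually_all.2 fun i =>
    eventually_integrable_comp_of_tendsto_integral hX (coord i)] with m hm
  have hcoord (i) : AEMeasurable (fun ω => b.repr (X m ω) i) μ :=
    harctan.aemeasurable_comp_iff.1 (hm i).aestronglyMeasurable.aemeasurable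
  rw [show X m = fun ω => ∑ i, b.repr (X m ω) i • b i from funext fun ω => (b.sum_repr _).symm]
  exact Finset.aemeasurable_fun_sum _ fun i _ => (hcoord i).smul_const (b i)

lemma exists_tendstoInDistribution_comp_add_of_tendsto_integral [NormedAddCommGroup E]
    [NormedSpace ℝ E] [FiniteDimensional ℝ E] [BorelSpace E] [IsProbabilityMeasure μ]
    {ν : Measure E} [IsProbabilityMeasure ν] {X : ℕ → Ω → E}
    (hX : ∀ f : BoundedContinuousFunction E ℝ,
      Tendsto (fun m => ∫ ω, f (X m ω) ∂μ) atTop (nhds (∫ x, f x ∂ν))) :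
    ∃ M, TendstoInDistribution (fun k => X (k + M)) atTop id (fun _ => μ) ν := by
  obtain ⟨M, hM⟩ := eventually_atTop.1 (eventually_aemeasurable_of_tendsto_integral hX)
  refine ⟨M, ⟨fun k => hM _ (Nat.le_add_left M k), aemeasurable_id, ?_⟩⟩
  refine ProbabilityMeasure.tendsto_iff_forall_integral_tendsto.2 fun f => ?_
  simp only [ProbabilityMeasure.coe_mk, Measure.map_id]
  simp_rw [integral_map (hM _ (Nat.le_add_left M _)) f.continuous.aestronglyMeasurable]
  exact (hX f).comp (tendsto_add_atTop_nat M)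

lemma TendstoInDistribution.tendsto_integral [TopologicalSpace E] [OpensMeasurableSpace E]
    [IsProbabilityMeasure μ] [IsProbabilityMeasure μ'] {X : ℕ → Ω → E} {Z : Ω' → E}
    (h : TendstoInDistribution X atTop Z (fun _ => μ) μ') (f : BoundedContinuousFunction E ℝ) :
    Tendsto (fun m => ∫ ω, f (X m ω) ∂μ) atTop (nhds (∫ ω, f (Z ω) ∂μ')) := by
  have := ProbabilityMeasure.tendsto_iff_forall_integral_tendsto.1 h.tendsto f
  simp only [ProbabilityMeasure.coe_mk] at this
  simpa only [integral_map (h.forall_aemeasurable _) f.continuous.aestronglyMeasurable,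
    integral_map h.aemeasurable_limit f.continuous.aestronglyMeasurable] using this

lemma TendstoInMeasure.const_mul {ι : Type*} {l : Filter ι} {e : ι → Ω → ℝ} {g : Ω → ℝ}
    (he : TendstoInMeasure μ e l g) (c : ℝ) :
    TendstoInMeasure μ (fun i ω => c * e i ω) l fun ω => c * g ω := by
  rw [tendstoInMeasure_iff_norm] at he ⊢
  intro ε hε
  refine tendsto_of_tendsto_of_tendsto_of_le_of_le tendsto_const_nhds
    (he (ε / (|c| + 1)) (by positivity)) (fun _ => zero_le) fun i => measure_mono fun ω hω => ?_
  simp only [mem_ofPred_eq, ← mul_sub, norm_mul, Real.norm_eq_abs] at hω ⊢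
  rw [div_le_iff₀ (by positivity)]
  nlinarith [abs_nonneg (e i ω - g ω)]

/-- `X m = O_p(1)`. -/
def BoundedInProbability [Norm E] (μ : Measure Ω) (X : ℕ → Ω → E) : Prop :=
  ∀ ε > (0 : ℝ), ∃ C : ℝ, ∀ m, μ {ω | C < ‖X m ω‖} ≤ ENNReal.ofReal ε

lemma IsTightMeasureSet.eventually_measure_norm_gt_le [NormedAddCommGroup E]
    {S : Set (Measure E)} (hS : IsTightMeasureSet S) {ε : ℝ} (hε : 0 < ε) :
    ∀ᶠ C in atTop, ∀ ν ∈ S, ν {x | C < ‖x‖} ≤ ENNReal.ofReal ε := by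
  filter_upwards [(tendsto_measure_norm_gt_of_isTightMeasureSet hS).eventually
    (eventually_le_nhds (ENNReal.ofReal_pos.2 hε))] with C hC ν hν
  exact (le_iSup₂ (f := fun ν (_ : ν ∈ S) => ν {x | C < ‖x‖}) ν hν).trans hC

lemma BoundedInProbability.tendstoInMeasure_zero_of_norm_le_mul [NormedAddCommGroup E]
    {X Y : ℕ → Ω → E} {e : ℕ → Ω → ℝ} (hX : BoundedInProbability μ X)
    (he : TendstoInMeasure μ e atTop 0) (hY : ∀ m ω, ‖Y m ω‖ ≤ ‖X m ω‖ * |e m ω|) :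
    TendstoInMeasure μ Y atTop 0 := by
  rw [tendstoInMeasure_iff_norm] at he ⊢
  intro ε hε
  refine ENNReal.tendsto_nhds_zero.2 fun δ hδ => ?_
  obtain ⟨η, -, hη, hηδ⟩ := ENNReal.lt_iff_exists_real_btwn.1 hδ
  have hη : 0 < η := ENNReal.ofReal_pos.1 hη
  obtain ⟨C, hC⟩ := hX (η / 2) (by positivity)
  set C' := max C 1
  have hC' : 0 < C' := lt_max_of_lt_right one_pos
  have hsub (m : ℕ) :
      {ω | ε ≤ ‖Y m ω - 0‖} ⊆ {ω | C' < ‖X m ω‖} ∪ {ω | ε / C' ≤ ‖e m ω - 0‖} := by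
    intro ω hω
    by_contra hcon
    simp only [mem_union, mem_ofPred_eq, not_or, not_lt, not_le, sub_zero,
      Real.norm_eq_abs] at hω hcon
    have : |e m ω| * C' < ε := (lt_div_iff₀ hC').1 hcon.2
    nlinarith [hY m ω, norm_nonneg (X m ω), abs_nonneg (e m ω)]
  filter_upwards [(he _ (div_pos hε hC')).eventually
    (eventually_le_nhds (ENNReal.ofReal_pos.2 (half_pos hη)))] with m hm
  calc μ {ω | ε ≤ ‖Y m ω - 0‖}
      ≤ μ {ω | C' < ‖X m ω‖} + μ {ω | ε / C' ≤ ‖e m ω - 0‖} :=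
        (measure_mono (hsub m)).trans (measure_union_le _ _)
    _ ≤ ENNReal.ofReal (η / 2) + ENNReal.ofReal (η / 2) := by
        refine add_le_add ((measure_mono fun ω (hω : C' < _) => ?_).trans (hC m)) hm
        exact (le_max_left C 1).trans_lt hω
    _ ≤ δ := by
        rw [← ENNReal.ofReal_add (by positivity) (by positivity), add_halves]
        exact hηδ.le

section BoundedInProbability

variable [NormedAddCommGroup E] [CompleteSpace E] [SecondCountableTopology E] [BorelSpace E]
  {X S : ℕ → Ω → E}

lemma BoundedInProbability.of_eventually [IsFiniteMeasure μ] (hX : ∀ m, AEMeasurable (X m) μ)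
    (h : ∀ ε > (0 : ℝ), ∃ C : ℝ, ∀ᶠ m in atTop, μ {ω | C < ‖X m ω‖} ≤ ENNReal.ofReal ε) :
    BoundedInProbability μ X := by
  intro ε hε
  obtain ⟨C₀, hC₀⟩ := h ε hε
  obtain ⟨M, hM⟩ := eventually_atTop.1 hC₀
  have hsingle (m : ℕ) : ∀ᶠ C in atTop, μ {ω | C < ‖X m ω‖} ≤ ENNReal.ofReal ε :=
    (isTightMeasureSet_singleton.eventually_measure_norm_gt_le hε).mono fun C hC =>
      (Measure.le_map_apply (hX m) _).trans (hC _ rfl)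
  have hinitial : ∀ᶠ C in atTop, ∀ m ∈ Iio M, μ {ω | C < ‖X m ω‖} ≤ ENNReal.ofReal ε :=
    (eventually_all_finite (finite_Iio M)).2 fun m _ => hsingle m
  obtain ⟨C, hC, hC₀C⟩ := (hinitial.and (eventually_ge_atTop C₀)).exists
  refine ⟨C, fun m => ?_⟩
  rcases lt_or_ge m M with hm | hm
  · exact hC m hm
  · exact (measure_mono fun ω (hω : C < ‖X m ω‖) => hC₀C.trans_lt hω).trans (hM m hm)

lemma BoundedInProbability.of_comp_add [IsFiniteMeasure μ] (hX : ∀ m, AEMeasurable (X m) μ)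
    {M : ℕ} (h : BoundedInProbability μ fun k => X (k + M)) : BoundedInProbability μ X :=
  .of_eventually hX fun ε hε =>
    let ⟨C, hC⟩ := h ε hε
    ⟨C, eventually_atTop.2 ⟨M, fun m hm => by simpa [Nat.sub_add_cancel hm] using hC (m - M)⟩⟩

lemma TendstoInDistribution.boundedInProbability [IsProbabilityMeasure μ]
    [IsProbabilityMeasure μ'] {Z : Ω' → E}
    (h : TendstoInDistribution X atTop Z (fun _ => μ) μ') : BoundedInProbability μ X := by
  have hcompact := h.tendsto.isCompact_insert_range.closure_of_subset (subset_insert _ _)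
  have htight := isTightMeasureSet_of_isCompact_closure hcompact
  intro ε hε
  obtain ⟨C, hC⟩ := (htight.eventually_measure_norm_gt_le hε).exists
  exact ⟨C, fun m => (Measure.le_map_apply (h.forall_aemeasurable m) _).trans
    (hC _ ⟨_, mem_range_self m, rfl⟩)⟩

lemma BoundedInProbability.of_norm_sub_le_mul [IsFiniteMeasure μ] {e : ℕ → Ω → ℝ}
    (hS : BoundedInProbability μ S) (hX : ∀ m, AEMeasurable (X m) μ)
    (he : TendstoInMeasure μ e atTop 0) (hXS : ∀ m ω, ‖X m ω - S m ω‖ ≤ ‖X m ω‖ * |e m ω|) :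
    BoundedInProbability μ X := by
  rw [tendstoInMeasure_iff_norm] at he
  refine .of_eventually hX fun ε hε => ?_
  obtain ⟨C, hC⟩ := hS (ε / 2) (by positivity)
  have hsub (m : ℕ) :
      {ω | 2 * C < ‖X m ω‖} ⊆ {ω | C < ‖S m ω‖} ∪ {ω | 1 / 2 ≤ ‖e m ω - 0‖} := by
    intro ω hω
    by_contra hcon
    simp only [mem_union, mem_ofPred_eq, not_or, not_lt, not_le, sub_zero,
      Real.norm_eq_abs] at hω hcon
    nlinarith [hXS m ω, norm_le_norm_add_norm_sub' (X m ω) (S m ω), norm_nonneg (X m ω)]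
  refine ⟨2 * C, ?_⟩
  filter_upwards [(he _ one_half_pos).eventually
    (eventually_le_nhds (ENNReal.ofReal_pos.2 (half_pos hε)))] with m hm
  calc μ {ω | 2 * C < ‖X m ω‖}
      ≤ μ {ω | C < ‖S m ω‖} + μ {ω | 1 / 2 ≤ ‖e m ω - 0‖} :=
        (measure_mono (hsub m)).trans (measure_union_le _ _)
    _ ≤ ENNReal.ofReal (ε / 2) + ENNReal.ofReal (ε / 2) := add_le_add (hC m) hm
    _ = ENNReal.ofReal ε := by rw [← ENNReal.ofReal_add (by positivity) (by positivity), add_halves]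

lemma tendstoInDistribution_of_norm_sub_le_mul [IsProbabilityMeasure μ]
    [IsProbabilityMeasure μ'] {Z : Ω' → E} {e : ℕ → Ω → ℝ}
    (hX : ∀ m, AEMeasurable (X m) μ) (hS : TendstoInDistribution S atTop Z (fun _ => μ) μ')
    (he : TendstoInMeasure μ e atTop 0) (hXS : ∀ m ω, ‖X m ω - S m ω‖ ≤ ‖X m ω‖ * |e m ω|) :
    BoundedInProbability μ X ∧ TendstoInDistribution X atTop Z (fun _ => μ) μ' := by
  have hbdd := hS.boundedInProbability.of_norm_sub_le_mul hX he hXS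
  exact ⟨hbdd, tendstoInDistribution_of_tendstoInMeasure_sub X Z hS
    (hbdd.tendstoInMeasure_zero_of_norm_le_mul he hXS) hX⟩

end BoundedInProbability

end MeasureTheory

lemma Matrix.norm_sub_inv_mul_le {m l : Type*} [Fintype m] [DecidableEq m] [Fintype l]
    {V : Matrix m m ℝ} (hV : V.det ≠ 0) {x s r : Matrix m l ℝ} {e : ℝ} (h : V * x = s + r)
    (hr : ‖r‖ ≤ ‖x‖ * e) : ‖x - V⁻¹ * s‖ ≤ ‖x‖ * |‖V⁻¹‖ * e| := by
  have hx : x - V⁻¹ * s = V⁻¹ * r := by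
    rw [sub_eq_iff_eq_add, ← Matrix.mul_add, add_comm, ← h, ← Matrix.mul_assoc,
      Matrix.nonsing_inv_mul _ (isUnit_iff_ne_zero.2 hV), Matrix.one_mul]
  calc ‖x - V⁻¹ * s‖ = ‖V⁻¹ * r‖ := by rw [hx]
    _ ≤ ‖V⁻¹‖ * ‖r‖ := Matrix.frobenius_norm_mul _ _
    _ ≤ ‖V⁻¹‖ * (‖x‖ * e) := by gcongr
    _ ≤ ‖x‖ * |‖V⁻¹‖ * e| := by
        rw [mul_left_comm]
        exact mul_le_mul_of_nonneg_left (le_abs_self _) (norm_nonneg _)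

/- `AEStronglyMeasurable` in the statement refers to the product topology on matrices, the
normed-space lemmas to the Frobenius one: the two agree, but not up to reducible unfolding, so
each needs its own Borel instance. -/
instance Matrix.borelSpace {n d : ℕ} : BorelSpace (Matrix (Fin n) (Fin d) ℝ) :=
  inferInstanceAs (BorelSpace (Fin n → Fin d → ℝ))

instance Matrix.frobeniusBorelSpace {n d : ℕ} :
    @BorelSpace (Matrix (Fin n) (Fin d) ℝ) PseudoMetricSpace.toUniformSpace.toTopologicalSpace _ :=
  ⟨Matrix.borelSpace.measurable_eq⟩

theorem slutsky_tls_general {Ω : Type*} [MeasurableSpace Ω] (μ : Measure Ω)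
    [IsProbabilityMeasure μ] {n d : ℕ}
    (VA : Matrix (Fin n) (Fin n) ℝ) (hVA : VA.det ≠ 0)
    (Δ y r : ℕ → Ω → Matrix (Fin n) (Fin d) ℝ) (em : ℕ → Ω → ℝ)
    (hΔmeas : ∀ m, AEStronglyMeasurable (Δ m) μ)
    (heq : ∀ m ω, VA * Δ m ω = -((Real.sqrt m)⁻¹ • y m ω) + r m ω)
    (hr : ∀ m ω, ‖r m ω‖ ≤ ‖Δ m ω‖ * em m ω)
    (hem : ∀ ε > (0 : ℝ),
      Tendsto (fun m => μ {ω | ε ≤ |em m ω|}) atTop (nhds 0))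
    (ν : Measure (Matrix (Fin n) (Fin d) ℝ)) [IsProbabilityMeasure ν]
    (hydist : ∀ f : BoundedContinuousFunction (Matrix (Fin n) (Fin d) ℝ) ℝ,
      Tendsto (fun m : ℕ => ∫ ω, f (-((Real.sqrt m)⁻¹ • y m ω)) ∂μ) atTop
        (nhds (∫ x, f x ∂ν))) :
    (∀ ε > (0 : ℝ), ∃ C : ℝ, ∀ m, μ {ω | C < ‖Δ m ω‖} ≤ ENNReal.ofReal ε) ∧
    (∀ f : BoundedContinuousFunction (Matrix (Fin n) (Fin d) ℝ) ℝ,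
      Tendsto (fun m => ∫ ω, f (Δ m ω) ∂μ) atTop
        (nhds (∫ x, f (VA⁻¹ * x) ∂ν))) := by
  have : SecondCountableTopology (Matrix (Fin n) (Fin d) ℝ) := secondCountable_of_proper
  -- Only from some index `M` on are the `S m` known to be a.e. measurable.
  obtain ⟨M, hS⟩ := exists_tendstoInDistribution_comp_add_of_tendsto_integral hydist
  have hem' : TendstoInMeasure μ em atTop 0 := tendstoInMeasure_iff_norm.2 (by simpa using hem)
  have he : TendstoInMeasure μ (fun k ω => ‖VA⁻¹‖ * em (k + M) ω) atTop 0 := by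
    simpa [Pi.zero_def] using (hem'.comp (tendsto_add_atTop_nat M)).const_mul ‖VA⁻¹‖
  obtain ⟨hbdd, hdist⟩ := tendstoInDistribution_of_norm_sub_le_mul
    (fun k => (hΔmeas (k + M)).aemeasurable)
    (hS.continuous_comp ((mulLeftLinearMap (Fin d) ℝ VA⁻¹).mkContinuous ‖VA⁻¹‖
      fun x => frobenius_norm_mul VA⁻¹ x).continuous) he
    (fun k ω => Matrix.norm_sub_inv_mul_le hVA (heq _ _) (hr _ _))
  exact ⟨hbdd.of_comp_add fun m => (hΔmeas m).aemeasurable,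
    fun f => (tendsto_add_atTop_iff_nat M).1 (hdist.tendsto_integral f)⟩

/-- Slutsky-type argument for the TLS estimator: if `X̂_m → X₀` in probability,
`Δ̂_m = √m(X̂_m − X₀)` satisfies `V_A Δ̂_m = −y_m/√m + r_m` with
`‖r_m‖ ≤ ‖Δ̂_m‖·ε_m`, `ε_m → 0` in probability, `V_A` invertible, and `−y_m/√m`
converges in distribution (to a law `ν`), then `Δ̂_m = O_p(1)` and
`√m(X̂_m − X₀)` converges in distribution to `V_A⁻¹·L` where `L ∼ ν`. -/
theorem slutsky_tls {Ω : Type*} [MeasurableSpace Ω] (μ : Measure Ω)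
    [IsProbabilityMeasure μ] {n d : ℕ}
    (VA : Matrix (Fin n) (Fin n) ℝ) (hVA : VA.det ≠ 0)
    (Xhat : ℕ → Ω → Matrix (Fin n) (Fin d) ℝ) (X0 : Matrix (Fin n) (Fin d) ℝ)
    (Δ y r : ℕ → Ω → Matrix (Fin n) (Fin d) ℝ) (em : ℕ → Ω → ℝ)
    (hΔmeas : ∀ m, AEStronglyMeasurable (Δ m) μ)
    (hΔ : ∀ m ω, Δ m ω = (Real.sqrt m) • (Xhat m ω - X0))
    (hconsist : ∀ ε > (0 : ℝ),
      Tendsto (fun m => μ {ω | ε ≤ ‖Xhat m ω - X0‖}) atTop (nhds 0))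
    (heq : ∀ m ω, VA * Δ m ω = -((Real.sqrt m)⁻¹ • y m ω) + r m ω)
    (hr : ∀ m ω, ‖r m ω‖ ≤ ‖Δ m ω‖ * em m ω)
    (hem : ∀ ε > (0 : ℝ),
      Tendsto (fun m => μ {ω | ε ≤ |em m ω|}) atTop (nhds 0))
    (ν : Measure (Matrix (Fin n) (Fin d) ℝ)) [IsProbabilityMeasure ν]
    (hydist : ∀ f : BoundedContinuousFunction (Matrix (Fin n) (Fin d) ℝ) ℝ,
      Tendsto (fun m : ℕ => ∫ ω, f (-((Real.sqrt m)⁻¹ • y m ω)) ∂μ) atTop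
        (nhds (∫ x, f x ∂ν))) :
    (∀ ε > (0 : ℝ), ∃ C : ℝ, ∀ m, μ {ω | C < ‖Δ m ω‖} ≤ ENNReal.ofReal ε) ∧
    (∀ f : BoundedContinuousFunction (Matrix (Fin n) (Fin d) ℝ) ℝ,
      Tendsto (fun m => ∫ ω, f (Δ m ω) ∂μ) atTop
        (nhds (∫ x, f (VA⁻¹ * x) ∂ν))) :=
  slutsky_tls_general μ VA hVA Δ y r em hΔmeas heq hr hem ν hydist
end
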